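/- arXiv:1003.4057 — 6 statements merged into one kernel-verified Lean document; each statement's English description precedes it below -/
import Mathlib

section
/- Let q ≥ 1 be an even integer and let C ⊆ B_q^4 be a code of words of length 4 over the alphabet B_q that is capable of correcting single deletions (equivalently, ρ(C) > 2 in the deletion–insertion metric). Then |C| ≤ q²(q+2)/4. -/
/-- The set of words obtained from `x` by deleting `s` of its letters,
i.e. the subsequences of `x` of length `x.length - s`. -/
def Deletions (s : ℕ) (x : List ℕ) : Set (List ℕ) :=
  {y | y.Sublist x ∧ y.length + s = x.length}

/-- A code `C` is capable of correcting `s` deletions if the deletion sets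
of distinct codewords are pairwise disjoint. -/
def CorrectsDeletions (s : ℕ) (C : Set (List ℕ)) : Prop :=
  C.Pairwise fun x y => Disjoint (Deletions s x) (Deletions s y)

/-- `x` is a word of length `n` over the alphabet `B_q = {0, 1, …, q-1}`. -/
def IsWord (q n : ℕ) (x : List ℕ) : Prop :=
  x.length = n ∧ ∀ a ∈ x, a < q

/-- The set of cardinalities of codes in `B_q^4` capable of correcting single deletions. -/
def codeSizes (q : ℕ) : Set ℕ :=
  {k | ∃ C : Set (List ℕ), (∀ x ∈ C, IsWord q 4 x) ∧
    CorrectsDeletions 1 C ∧ C.ncard = k}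

/-!
Give a word of length 3 with `k` runs the weight `2 ^ (3 - k)`. The whole cube `B_q^3` weighs
`q (q + 1) ^ 2`, while the single-deletion ball of any length-4 word weighs at least `4`.
For a letter `l`, the `q - 1` words `l r l` with `r ≠ l` form a set of odd size (as `q` is even),
so either one of them is covered by no ball, or some ball contains an odd number of them.
A check over the equality patterns of `abcd` shows that a ball containing an odd number of words
`l r l` for `j` different letters `l` weighs at least `4 + j`. Comparing weights gives
`4 |C| + q ≤ q (q + 1) ^ 2 = q ^ 2 (q + 2) + q`.
-/

open Finset

def deletionFinset (s : ℕ) (x : List ℕ) : Finset (List ℕ) :=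
  (x.sublistsLen (x.length - s)).toFinset

theorem coe_deletionFinset {s : ℕ} {x : List ℕ} (h : s ≤ x.length) :
    (deletionFinset s x : Set (List ℕ)) = Deletions s x := by
  ext y
  simp only [deletionFinset, mem_coe, List.mem_toFinset, List.mem_sublistsLen, Deletions,
    Set.mem_ofPred_eq]
  exact and_congr_right fun _ => by omega

theorem deletionFinset_one_four (a b c d : ℕ) :
    deletionFinset 1 [a, b, c, d] = {[b, c, d], [a, c, d], [a, b, d], [a, b, c]} := by
  simp [deletionFinset,
    show [a, b, c, d].sublistsLen 3 = [[b, c, d], [a, c, d], [a, b, d], [a, b, c]] from rfl]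

def wordFinset (q : ℕ) : ℕ → Finset (List ℕ)
  | 0 => {[]}
  | n + 1 => (range q ×ˢ wordFinset q n).image fun p => p.1 :: p.2

theorem mem_wordFinset {q n : ℕ} {x : List ℕ} : x ∈ wordFinset q n ↔ IsWord q n x := by
  induction n generalizing x with
  | zero => simp +contextual [wordFinset, IsWord]
  | succ n ih =>
    cases x with
    | nil => simp [wordFinset, IsWord]
    | cons a x => simp [wordFinset, IsWord, ih, and_left_comm]

theorem sum_wordFinset_succ {M : Type*} [AddCommMonoid M] (q n : ℕ) (f : List ℕ → M) :
    ∑ x ∈ wordFinset q (n + 1), f x =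
      ∑ a ∈ range q, ∑ x ∈ wordFinset q n, f (a :: x) := by
  rw [wordFinset, sum_image fun p _ p' _ h => by simpa [Prod.ext_iff] using h, sum_product]

theorem IsWord.of_mem_deletionFinset {q n s : ℕ} {x y : List ℕ} (hx : IsWord q n x)
    (hy : y ∈ deletionFinset s x) : IsWord q (n - s) y := by
  rw [deletionFinset, List.mem_toFinset, List.mem_sublistsLen] at hy
  exact ⟨hy.2.trans (hx.1 ▸ rfl), fun a ha => hx.2 a (hy.1.subset ha)⟩

theorem deletionFinset_one_subset {q : ℕ} {x : List ℕ} (hx : IsWord q 4 x) :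
    deletionFinset 1 x ⊆ wordFinset q 3 :=
  fun _ hy => mem_wordFinset.2 (hx.of_mem_deletionFinset hy)

def weight : List ℕ → ℕ
  | [u, v, w] => (if u = v then 2 else 1) * (if v = w then 2 else 1)
  | _ => 0

theorem weight_three (u v w : ℕ) :
    weight [u, v, w] = (if u = v then 2 else 1) * (if v = w then 2 else 1) := rfl

theorem one_le_weight {q : ℕ} {y : List ℕ} (hy : y ∈ wordFinset q 3) : 1 ≤ weight y := by
  obtain ⟨u, v, w, rfl⟩ := List.length_eq_three.1 (mem_wordFinset.1 hy).1
  rw [weight_three]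
  split_ifs <;> norm_num

theorem sum_range_ite_eq_two_one {q v : ℕ} (hv : v < q) :
    ∑ w ∈ range q, (if v = w then 2 else 1) = q + 1 := by
  rw [sum_ite, filter_eq, if_pos (mem_range.2 hv)]
  simp only [sum_const, card_singleton, smul_eq_mul, filter_ne, mem_range, hv, card_erase_of_mem,
    card_range]
  omega

theorem sum_weight_wordFinset_three (q : ℕ) :
    ∑ y ∈ wordFinset q 3, weight y = q * (q + 1) ^ 2 := by
  simp only [sum_wordFinset_succ]
  simp only [wordFinset, sum_singleton, weight_three, ← mul_sum]
  rw [sum_congr rfl fun u _ => sum_congr rfl fun v hv => by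
    rw [sum_range_ite_eq_two_one (mem_range.1 hv)]]
  rw [sum_congr rfl fun u hu => by rw [← sum_mul, sum_range_ite_eq_two_one (mem_range.1 hu)]]
  simp [sq]

def isSandwich (l : ℕ) : List ℕ → Bool
  | [p, r, s] => p = l && s = l && r != l
  | _ => false

theorem isSandwich_three (l p r s : ℕ) :
    isSandwich l [p, r, s] = (p = l && s = l && r != l) := rfl

def sandwiches (q l : ℕ) : Finset (List ℕ) :=
  (wordFinset q 3).filter (isSandwich l ·)

theorem sandwiches_eq_image {q l : ℕ} (hl : l < q) :
    sandwiches q l = ((range q).erase l).image fun r => [l, r, l] := by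
  ext y
  simp only [sandwiches, mem_filter, mem_wordFinset, mem_image, mem_erase, mem_range]
  constructor
  · rintro ⟨⟨hlen, hlt⟩, hy⟩
    obtain ⟨p, r, s, rfl⟩ := List.length_eq_three.1 hlen
    simp only [isSandwich_three, Bool.and_eq_true, decide_eq_true_eq, bne_iff_ne] at hy
    obtain ⟨⟨rfl, rfl⟩, hr⟩ := hy
    exact ⟨r, ⟨hr, hlt r (by simp)⟩, rfl⟩
  · rintro ⟨r, ⟨hr, hrq⟩, rfl⟩
    refine ⟨⟨rfl, ?_⟩, by simp [isSandwich_three, hr]⟩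
    simp [hl, hrq]

theorem card_sandwiches {q l : ℕ} (hl : l < q) : #(sandwiches q l) = q - 1 := by
  rw [sandwiches_eq_image hl, card_image_of_injective _ fun r r' h => by simpa using h,
    card_erase_of_mem (mem_range.2 hl), card_range]

theorem disjoint_sandwiches {q l l' : ℕ} (h : l ≠ l') :
    Disjoint (sandwiches q l) (sandwiches q l') := by
  refine disjoint_filter.2 fun y hy hl hl' => ?_
  obtain ⟨p, r, s, rfl⟩ := List.length_eq_three.1 (mem_wordFinset.1 hy).1
  simp only [isSandwich_three, Bool.and_eq_true, decide_eq_true_eq] at hl hl'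
  exact h (hl.1.1.symm.trans hl'.1.1)

def ballWeight (x : List ℕ) : ℕ := ∑ y ∈ deletionFinset 1 x, weight y

def sandwichCount (l : ℕ) (x : List ℕ) : ℕ := #((deletionFinset 1 x).filter (isSandwich l ·))

theorem sandwichCount_eq_zero {l a b : ℕ} (c d : ℕ) (ha : l ≠ a) (hb : l ≠ b) :
    sandwichCount l [a, b, c, d] = 0 := by
  simp [sandwichCount, deletionFinset_one_four, isSandwich_three, filter_insert, filter_singleton,
    Ne.symm ha, Ne.symm hb]

theorem card_filter_odd_sandwichCount_pair_add_four_le (a b c d : ℕ) :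
    #(({a, b} : Finset ℕ).filter fun l => Odd (sandwichCount l [a, b, c, d])) + 4 ≤
      ballWeight [a, b, c, d] := by
  -- `eq_comm` puts the disequalities left after `subst_vars` into the orientation `simp` meets.
  by_cases hab : a = b <;> by_cases hac : a = c <;> by_cases had : a = d <;>
    by_cases hbc : b = c <;> by_cases hbd : b = d <;> by_cases hcd : c = d <;> subst_vars <;>
    simp_all [ballWeight, deletionFinset_one_four, sandwichCount, isSandwich_three, weight_three,
      sum_insert, filter_insert, filter_singleton, @eq_comm ℕ, Nat.odd_iff]

theorem card_filter_odd_sandwichCount_add_four_le (s : Finset ℕ) {x : List ℕ}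
    (hx : x.length = 4) :
    #(s.filter fun l => Odd (sandwichCount l x)) + 4 ≤ ballWeight x := by
  obtain ⟨a, b, c, d, rfl⟩ := List.length_eq_four.1 hx
  refine le_trans (Nat.add_le_add_right (card_le_card fun l hl => ?_) 4)
    (card_filter_odd_sandwichCount_pair_add_four_le a b c d)
  rw [mem_filter] at hl ⊢
  refine ⟨?_, hl.2⟩
  by_contra hab
  simp only [mem_insert, mem_singleton, not_or] at hab
  exact Nat.not_odd_zero (sandwichCount_eq_zero c d hab.1 hab.2 ▸ hl.2)

theorem one_le_card_filter_odd_add {ι : Type*} (s : Finset ι) (f : ι → ℕ) {u : ℕ}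
    (h : Odd (∑ i ∈ s, f i + u)) : 1 ≤ #(s.filter fun i => Odd (f i)) + u := by
  by_contra! h'
  have hu : u = 0 := by omega
  have hs : s.filter (fun i => Odd (f i)) = ∅ := card_eq_zero.1 (by omega)
  have heven : Even (∑ i ∈ s, f i) :=
    even_sum _ fun i hi => Nat.not_odd_iff_even.1 fun ho => filter_eq_empty_iff.1 hs hi ho
  rw [hu, add_zero] at h
  exact Nat.not_even_iff_odd.2 h heven

section Counting

variable {q : ℕ} {C : Finset (List ℕ)}

def coveredWords (C : Finset (List ℕ)) : Finset (List ℕ) := C.biUnion (deletionFinset 1)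

theorem coveredWords_subset (hC : ∀ x ∈ C, IsWord q 4 x) : coveredWords C ⊆ wordFinset q 3 :=
  biUnion_subset.2 fun x hx => deletionFinset_one_subset (hC x hx)

theorem sum_ballWeight_add_sum_weight_sdiff (hC : ∀ x ∈ C, IsWord q 4 x)
    (hdisj : (C : Set (List ℕ)).PairwiseDisjoint (deletionFinset 1)) :
    ∑ x ∈ C, ballWeight x + ∑ y ∈ wordFinset q 3 \ coveredWords C, weight y =
      q * (q + 1) ^ 2 := by
  rw [← sum_weight_wordFinset_three, ← sum_sdiff (coveredWords_subset hC), coveredWords,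
    sum_biUnion hdisj, add_comm]
  rfl

theorem sum_sandwichCount_add_card_sdiff (hC : ∀ x ∈ C, IsWord q 4 x)
    (hdisj : (C : Set (List ℕ)).PairwiseDisjoint (deletionFinset 1)) {l : ℕ} (hl : l < q) :
    ∑ x ∈ C, sandwichCount l x + #(sandwiches q l \ coveredWords C) = q - 1 := by
  rw [← card_sandwiches hl, ← card_inter_add_card_sdiff (sandwiches q l) (coveredWords C),
    coveredWords, inter_biUnion, card_biUnion (hdisj.mono fun _ => inter_subset_right)]
  congr 1
  refine sum_congr rfl fun x hx => ?_
  rw [sandwichCount, sandwiches, filter_inter,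
    inter_eq_right.2 (deletionFinset_one_subset (hC x hx))]

theorem one_le_card_filter_odd_add_card_sdiff (hq : Even q) (hC : ∀ x ∈ C, IsWord q 4 x)
    (hdisj : (C : Set (List ℕ)).PairwiseDisjoint (deletionFinset 1)) {l : ℕ} (hl : l < q) :
    1 ≤ #(C.filter fun x => Odd (sandwichCount l x)) + #(sandwiches q l \ coveredWords C) := by
  refine one_le_card_filter_odd_add C _ ?_
  rw [sum_sandwichCount_add_card_sdiff hC hdisj hl]
  obtain ⟨k, rfl⟩ := hq
  exact ⟨k - 1, by omega⟩

theorem sum_card_sandwiches_sdiff_le (S : Finset (List ℕ)) :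
    ∑ l ∈ range q, #(sandwiches q l \ S) ≤ ∑ y ∈ wordFinset q 3 \ S, weight y := by
  rw [← card_biUnion fun l _ l' _ h => (disjoint_sandwiches h).mono sdiff_le sdiff_le]
  calc _ ≤ #(wordFinset q 3 \ S) :=
        card_le_card <| biUnion_subset.2 fun l _ => sdiff_subset_sdiff (filter_subset _ _) le_rfl
    _ ≤ _ := by
        simpa using card_nsmul_le_sum _ _ 1 fun y hy => one_le_weight (mem_sdiff.1 hy).1

theorem sum_card_filter_odd_sandwichCount_add_le (hC : ∀ x ∈ C, IsWord q 4 x) :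
    ∑ l ∈ range q, #(C.filter fun x => Odd (sandwichCount l x)) + 4 * #C ≤
      ∑ x ∈ C, ballWeight x := by
  have hswap := sum_card_bipartiteAbove_eq_sum_card_bipartiteBelow
    (fun l x => Odd (sandwichCount l x)) (s := range q) (t := C)
  simp only [bipartiteAbove, bipartiteBelow] at hswap
  rw [hswap, card_eq_sum_ones, mul_sum, ← sum_add_distrib]
  exact sum_le_sum fun x hx => by
    simpa using card_filter_odd_sandwichCount_add_four_le (range q) (hC x hx).1

theorem four_mul_card_add_le (hq : Even q) (hC : ∀ x ∈ C, IsWord q 4 x)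
    (hdisj : (C : Set (List ℕ)).PairwiseDisjoint (deletionFinset 1)) :
    4 * #C + q ≤ q * (q + 1) ^ 2 := by
  have hletters : q ≤ ∑ l ∈ range q,
      (#(C.filter fun x => Odd (sandwichCount l x)) + #(sandwiches q l \ coveredWords C)) := by
    simpa using card_nsmul_le_sum _ _ 1 fun l hl =>
      one_le_card_filter_odd_add_card_sdiff hq hC hdisj (mem_range.1 hl)
  rw [sum_add_distrib] at hletters
  have htotal := sum_ballWeight_add_sum_weight_sdiff hC hdisj
  have hballs := sum_card_filter_odd_sandwichCount_add_le (q := q) hC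
  have huncovered := sum_card_sandwiches_sdiff_le (q := q) (coveredWords C)
  omega

end Counting

theorem stmt0_general (q : ℕ) (hqeven : Even q)
    (C : Set (List ℕ)) (hC : ∀ x ∈ C, IsWord q 4 x)
    (hcorr : CorrectsDeletions 1 C) :
    C.ncard ≤ q ^ 2 * (q + 2) / 4 := by
  lift C to Finset (List ℕ) using
    (wordFinset q 4).finite_toSet.subset fun x hx => mem_wordFinset.2 (hC x hx)
  have hdisj : (C : Set (List ℕ)).PairwiseDisjoint (deletionFinset 1) := fun x hx y hy hxy => by
    have hlen : ∀ z ∈ (C : Set (List ℕ)), 1 ≤ z.length := fun z hz => by simp [(hC z hz).1]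
    rw [Function.onFun, ← disjoint_coe, coe_deletionFinset (hlen x hx),
      coe_deletionFinset (hlen y hy)]
    exact hcorr hx hy hxy
  rw [Set.ncard_coe_finset, Nat.le_div_iff_mul_le four_pos]
  linarith [four_mul_card_add_le hqeven hC hdisj,
    show q * (q + 1) ^ 2 = q ^ 2 * (q + 2) + q by ring]

theorem stmt0 (q : ℕ) (hq : 1 ≤ q) (hqeven : Even q)
    (C : Set (List ℕ)) (hC : ∀ x ∈ C, IsWord q 4 x)
    (hcorr : CorrectsDeletions 1 C) :
    C.ncard ≤ q ^ 2 * (q + 2) / 4 :=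
  stmt0_general q hqeven C hC hcorr
end

section
/- (Substitution lemma, general version.) Let C ⊆ B_q^n be a code capable of correcting s deletions. If A ⊆ C, B ⊆ B_q^n, ⌊B⌋_s ⊆ ⌊A⌋_s (where ⌊X⌋_s = ⋃_{x∈X} ⌊x⌋_s), and B is itself capable of correcting s deletions, then (C \ A) ∪ B is capable of correcting s deletions. -/
/-! A word `x ∈ C \ A` has deletion set disjoint from those of all of `A`, hence from their union,
which contains the deletion set of every word of `B`. So the new words do not clash with the
surviving old ones, and within `C \ A` and within `B` disjointness is inherited. -/

namespace Set

variable {ι α : Type*} [Order.Frame α] {f : ι → α} {A B C : Set ι}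

theorem PairwiseDisjoint.disjoint_biSup_of_mem_diff (hC : C.PairwiseDisjoint f) (hA : A ⊆ C)
    {x : ι} (hx : x ∈ C \ A) : Disjoint (f x) (⨆ a ∈ A, f a) :=
  disjoint_iSup₂_iff.2 fun _ ha => hC hx.1 (hA ha) fun h => hx.2 (h ▸ ha)

theorem PairwiseDisjoint.diff_union (hC : C.PairwiseDisjoint f) (hA : A ⊆ C)
    (hB : B.PairwiseDisjoint f) (hsub : ⨆ b ∈ B, f b ≤ ⨆ a ∈ A, f a) :
    (C \ A ∪ B).PairwiseDisjoint f :=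
  (hC.subset sdiff_subset).union hB fun _ hx _ hy _ =>
    (hC.disjoint_biSup_of_mem_diff hA hx).mono_right ((le_biSup f hy).trans hsub)

end Set

theorem stmt3_general (s : ℕ) (C A B : Set (List ℕ))
    (hcorr : CorrectsDeletions s C) (hA : A ⊆ C)
    (hsub : (⋃ x ∈ B, Deletions s x) ⊆ ⋃ x ∈ A, Deletions s x)
    (hBcorr : CorrectsDeletions s B) :
    CorrectsDeletions s ((C \ A) ∪ B) :=
  Set.PairwiseDisjoint.diff_union hcorr hA hBcorr hsub

theorem stmt3 (q n s : ℕ) (C A B : Set (List ℕ)) (hC : ∀ z ∈ C, IsWord q n z)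
    (hcorr : CorrectsDeletions s C) (hA : A ⊆ C) (hB : ∀ z ∈ B, IsWord q n z)
    (hsub : (⋃ x ∈ B, Deletions s x) ⊆ ⋃ x ∈ A, Deletions s x)
    (hBcorr : CorrectsDeletions s B) :
    CorrectsDeletions s ((C \ A) ∪ B) :=
  stmt3_general s C A B hcorr hA hsub hBcorr
end

section
/- Let x = (a₁,a₂,a₃,a₄) ∈ B_q^4 be a word with pairwise distinct letters. Then the six-word code ⟨x⟩_A = {(a₁,a₂,a₃,a₄), (a₁,a₄,a₃,a₂), (a₂,a₄,a₁,a₃), (a₃,a₄,a₁,a₂), (a₃,a₂,a₁,a₄), (a₄,a₂,a₃,a₁)} is capable of correcting single deletions. -/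
/-- The six-word code `⟨x⟩_A` generated by a word `x = (a₁,a₂,a₃,a₄)`
with pairwise distinct letters. -/
def codeA (a1 a2 a3 a4 : ℕ) : Set (List ℕ) :=
  {[a1, a2, a3, a4], [a1, a4, a3, a2], [a2, a4, a1, a3],
   [a3, a4, a1, a2], [a3, a2, a1, a4], [a4, a2, a3, a1]}

/-- The eight-word code `⟨x⟩_B` generated by a word `x = (a₁,a₂,a₃,a₄)`
with pairwise distinct letters. -/
def codeB (a1 a2 a3 a4 : ℕ) : Set (List ℕ) :=
  {[a1, a4, a3, a2], [a2, a4, a1, a3], [a3, a2, a1, a4], [a4, a2, a3, a1],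
   [a1, a3, a4, a1], [a2, a3, a4, a2], [a3, a1, a2, a3], [a4, a1, a2, a4]}

/-! Relabelling each letter by its position in `x` maps `⟨x⟩_A` injectively onto
`⟨(0,1,2,3)⟩_A`, and a word obtained from two codewords by one deletion each is still
obtained from both relabelled codewords. So it suffices to check the single code
`⟨(0,1,2,3)⟩_A`, a finite computation: on any three of the four letters its six words
induce the six different orders. -/

theorem Set.InjOn.list_map {α β : Type*} {g : α → β} {t : Set α} (hg : Set.InjOn g t) :
    Set.InjOn (List.map g) {x | ∀ a ∈ x, a ∈ t} := by
  intro x hx y hy hxy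
  induction x generalizing y with
  | nil => simpa using hxy.symm
  | cons a x ih =>
    cases y with
    | nil => simp at hxy
    | cons b y =>
      simp only [List.map_cons, List.cons.injEq] at hxy
      simp only [Set.mem_ofPred_eq, List.mem_cons, forall_eq_or_imp] at hx hy
      rw [hg hx.1 hy.1 hxy.1, ih hx.2 hy.2 hxy.2]

theorem deletions_subset_preimage_map (g : ℕ → ℕ) (s : ℕ) (x : List ℕ) :
    Deletions s x ⊆ List.map g ⁻¹' Deletions s (x.map g) :=
  fun _ ⟨hsub, hlen⟩ => ⟨hsub.map g, by simpa using hlen⟩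

theorem disjoint_deletions_of_map (g : ℕ → ℕ) {s : ℕ} {x y : List ℕ}
    (h : Disjoint (Deletions s (x.map g)) (Deletions s (y.map g))) :
    Disjoint (Deletions s x) (Deletions s y) :=
  (h.preimage (List.map g)).mono (deletions_subset_preimage_map g s x)
    (deletions_subset_preimage_map g s y)

theorem CorrectsDeletions.of_map (g : ℕ → ℕ) {s : ℕ} {C : Set (List ℕ)}
    (hg : Set.InjOn (List.map g) C) (h : CorrectsDeletions s (List.map g '' C)) :
    CorrectsDeletions s C :=
  (hg.pairwise_image.1 h).mono' fun _ _ => disjoint_deletions_of_map g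

theorem deletions_eq_sublistsLen {s : ℕ} {x : List ℕ} (hs : s ≤ x.length) :
    Deletions s x = ↑(x.sublistsLen (x.length - s)).toFinset := by
  ext y
  simp only [Deletions, Set.mem_ofPred_eq, Finset.mem_coe, List.mem_toFinset, List.mem_sublistsLen]
  exact and_congr_right fun _ => by omega

theorem correctsDeletions_codeA_zero_one_two_three : CorrectsDeletions 1 (codeA 0 1 2 3) := by
  simp (disch := simp) only [CorrectsDeletions, codeA, Set.pairwise_insert, Set.pairwise_singleton,
    deletions_eq_sublistsLen, Finset.disjoint_coe, Set.mem_insert_iff, Set.mem_singleton_iff,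
    forall_eq_or_imp, forall_eq, true_and]
  and_intros <;> intro <;> decide

theorem stmt4_general (a1 a2 a3 a4 : ℕ)
    (hdist : [a1, a2, a3, a4].Nodup) :
    CorrectsDeletions 1 (codeA a1 a2 a3 a4) := by
  set l := [a1, a2, a3, a4]
  have hne : a1 ≠ a2 ∧ a1 ≠ a3 ∧ a1 ≠ a4 ∧ a2 ≠ a3 ∧ a2 ≠ a4 ∧ a3 ≠ a4 := by
    simpa [l, and_assoc] using hdist
  have himage : List.map l.idxOf '' codeA a1 a2 a3 a4 = codeA 0 1 2 3 := by
    simp [codeA, Set.image_insert_eq, l, List.idxOf_cons_ne, hne]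
  have hinj : Set.InjOn (List.map l.idxOf) (codeA a1 a2 a3 a4) := by
    refine (Set.InjOn.list_map (t := {a | a ∈ l}) fun _ ha _ _ => (List.idxOf_inj ha).1).mono ?_
    simp [codeA, Set.insert_subset_iff, l]
  exact CorrectsDeletions.of_map l.idxOf hinj
    (himage ▸ correctsDeletions_codeA_zero_one_two_three)

theorem stmt4 (q a1 a2 a3 a4 : ℕ)
    (hword : IsWord q 4 [a1, a2, a3, a4])
    (hdist : [a1, a2, a3, a4].Nodup) :
    CorrectsDeletions 1 (codeA a1 a2 a3 a4) :=
  stmt4_general a1 a2 a3 a4 hdist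
end

section
/- Let x = (a₁,a₂,a₃,a₄) ∈ B_q^4 be a word with pairwise distinct letters. Then the eight-word code ⟨x⟩_B = {(a₁,a₄,a₃,a₂), (a₂,a₄,a₁,a₃), (a₃,a₂,a₁,a₄), (a₄,a₂,a₃,a₁), (a₁,a₃,a₄,a₁), (a₂,a₃,a₄,a₂), (a₃,a₁,a₂,a₃), (a₄,a₁,a₂,a₄)} is capable of correcting single deletions. -/
/-!
Whether two words have a common subsequence of a given length depends only on which of their
letters coincide, so relabeling the letters by a map that is injective on the letters in use
preserves the property of correcting deletions. Every `⟨x⟩_B` is the relabeling of `⟨0123⟩_B`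
by `i ↦ aᵢ₊₁`, and for that one code the disjointness of the deletion sets is a finite computation.
-/

theorem List.eq_of_map_eq_of_injOn {α β : Type*} {f : α → β} {s : Set α} (hf : Set.InjOn f s)
    {l l' : List α} (hl : ∀ a ∈ l, a ∈ s) (hl' : ∀ a ∈ l', a ∈ s) (h : l.map f = l'.map f) :
    l = l' := by
  induction l generalizing l' with
  | nil => simpa [eq_comm] using h
  | cons a l ih =>
    cases l' with
    | nil => simp at h
    | cons a' l' =>
      simp only [List.map_cons, List.cons.injEq] at h
      simp only [List.mem_cons, forall_eq_or_imp] at hl hl'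
      exact congrArg₂ _ (hf hl.1 hl'.1 h.1) (ih hl.2 hl'.2 h.2)

theorem List.injOn_getD_of_nodup {α : Type*} {l : List α} (hl : l.Nodup) (d : α) :
    Set.InjOn (l.getD · d) (Set.Iio l.length) := fun i hi j hj h => by
  simp only [List.getD_eq_getElem _ _ hi, List.getD_eq_getElem _ _ hj] at h
  exact hl.getElem_inj_iff.1 h

theorem CorrectsDeletions.map {s : ℕ} {C : Set (List ℕ)} (hC : CorrectsDeletions s C)
    {f : ℕ → ℕ} {A : Set ℕ} (hCA : ∀ x ∈ C, ∀ a ∈ x, a ∈ A) (hf : Set.InjOn f A) :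
    CorrectsDeletions s (List.map f '' C) := by
  rintro _ ⟨x, hx, rfl⟩ _ ⟨y, hy, rfl⟩ hne
  rw [Set.disjoint_left]
  rintro z ⟨hzx, hlenx⟩ ⟨hzy, hleny⟩
  obtain ⟨l, hlx, rfl⟩ := List.sublist_map_iff.1 hzx
  obtain ⟨l', hly, hll'⟩ := List.sublist_map_iff.1 hzy
  have hl : l = l' := List.eq_of_map_eq_of_injOn hf (fun a ha => hCA x hx a (hlx.subset ha))
    (fun a ha => hCA y hy a (hly.subset ha)) hll'
  subst hl
  simp only [List.length_map] at hlenx hleny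
  exact Set.disjoint_left.1 (hC hx hy (ne_of_apply_ne _ hne)) ⟨hlx, hlenx⟩ ⟨hly, hleny⟩

theorem correctsDeletions_of_forall_sublists {s : ℕ} (L : List (List ℕ))
    (h : ∀ x ∈ L, ∀ y ∈ L, x ≠ y → ∀ z ∈ x.sublists, z.length + s = x.length → ¬z.Sublist y) :
    CorrectsDeletions s {x | x ∈ L} := by
  intro x hx y hy hne
  rw [Set.disjoint_left]
  rintro z ⟨hzx, hlen⟩ ⟨hzy, -⟩
  exact h x hx y hy hne z (List.mem_sublists.2 hzx) hlen hzy

theorem correctsDeletions_codeB_zero_one_two_three : CorrectsDeletions 1 (codeB 0 1 2 3) := by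
  have hL : codeB 0 1 2 3 = {x | x ∈ [[0, 3, 2, 1], [1, 3, 0, 2], [2, 1, 0, 3], [3, 1, 2, 0],
      [0, 2, 3, 0], [1, 2, 3, 1], [2, 0, 1, 2], [3, 0, 1, 3]]} := by
    ext x
    simp [codeB]
  rw [hL]
  exact correctsDeletions_of_forall_sublists _ (by decide)

theorem stmt5_general (a1 a2 a3 a4 : ℕ)
    (hdist : [a1, a2, a3, a4].Nodup) :
    CorrectsDeletions 1 (codeB a1 a2 a3 a4) := by
  have hrelabel : codeB a1 a2 a3 a4 = List.map ([a1, a2, a3, a4].getD · 0) '' codeB 0 1 2 3 := by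
    simp [codeB, Set.image_insert_eq]
  have hletters : ∀ x ∈ codeB 0 1 2 3, ∀ a ∈ x, a ∈ Set.Iio 4 := by
    simp [codeB]
  rw [hrelabel]
  exact correctsDeletions_codeB_zero_one_two_three.map hletters (List.injOn_getD_of_nodup hdist 0)

theorem stmt5 (q a1 a2 a3 a4 : ℕ)
    (hword : IsWord q 4 [a1, a2, a3, a4])
    (hdist : [a1, a2, a3, a4].Nodup) :
    CorrectsDeletions 1 (codeB a1 a2 a3 a4) :=
  stmt5_general a1 a2 a3 a4 hdist
end

section
/- (Reiss.) For every positive integer n, the n(2n−1) unordered pairs of elements of a 2n-element set can be partitioned into 2n−1 sets S₁, S₂, …, S_{2n−1} such that each S_i consists of n pairwise disjoint pairs (equivalently, the complete graph K_{2n} admits a proper edge coloring with 2n−1 colors in which each color class is a perfect matching). -/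
/-!
Index the `2n` points by `Option (ZMod m)` with `m = 2n - 1`, the extra point `none` sitting at
the centre. In round `i` the centre is matched with `i` and every other `a` with its reflection
`2i - a` through `i`. Since `2` is invertible modulo the odd number `m`, these are fixed-point-free
involutions, and a pair `{a, b}` is matched in exactly one round: `i = (a + b) / 2`, or `i = a`
when `b` is the centre.
-/

open Finset Function

section OrbitPairs

variable {V : Type*} [DecidableEq V] {σ : V → V}

lemma pair_apply_eq_of_mem (hσ : Involutive σ) {x z : V} (hz : z ∈ ({x, σ x} : Finset V)) :
    ({x, σ x} : Finset V) = {z, σ z} := by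
  rcases mem_insert.1 hz with rfl | h
  · rfl
  · rw [mem_singleton.1 h, hσ, pair_comm]

variable [Fintype V]

variable (σ) in
def orbitPairs : Finset (Finset V) :=
  univ.image fun x => {x, σ x}

lemma pair_mem_orbitPairs_iff (hσ : Involutive σ) {a b : V} (hab : a ≠ b) :
    ({a, b} : Finset V) ∈ orbitPairs σ ↔ σ a = b := by
  refine ⟨fun h => ?_, fun h => mem_image.2 ⟨a, mem_univ _, by rw [h]⟩⟩
  obtain ⟨x, -, hx⟩ := mem_image.1 h
  rw [pair_apply_eq_of_mem hσ (hx ▸ mem_insert_self a {b})] at hx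
  have hb : b ∈ ({a, σ a} : Finset V) := hx ▸ mem_insert_of_mem (mem_singleton_self b)
  rcases mem_insert.1 hb with rfl | h
  · exact absurd rfl hab
  · exact (mem_singleton.1 h).symm

lemma card_eq_two_of_mem_orbitPairs (hfree : ∀ x, σ x ≠ x) {p : Finset V}
    (hp : p ∈ orbitPairs σ) : p.card = 2 := by
  obtain ⟨x, -, rfl⟩ := mem_image.1 hp
  exact card_pair (hfree x).symm

lemma pairwise_disjoint_orbitPairs (hσ : Involutive σ) :
    (orbitPairs σ : Set (Finset V)).Pairwise Disjoint := by
  rintro _ hp _ hq hne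
  obtain ⟨x, -, rfl⟩ := mem_image.1 hp
  obtain ⟨y, -, rfl⟩ := mem_image.1 hq
  refine disjoint_left.2 fun z hzx hzy => hne ?_
  rw [pair_apply_eq_of_mem hσ hzx, pair_apply_eq_of_mem hσ hzy]

lemma two_mul_card_orbitPairs (hσ : Involutive σ) (hfree : ∀ x, σ x ≠ x) :
    2 * (orbitPairs σ).card = Fintype.card V := by
  have hcover : (orbitPairs σ).biUnion id = univ := eq_univ_of_forall fun x =>
    mem_biUnion.2 ⟨_, mem_image_of_mem _ (mem_univ x), mem_insert_self _ _⟩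
  have hsum := card_biUnion (s := orbitPairs σ) (t := id)
    fun p hp q hq hne => pairwise_disjoint_orbitPairs hσ hp hq hne
  rw [hcover, card_univ, sum_congr rfl fun p hp => (card_eq_two_of_mem_orbitPairs hfree hp :
    (id p).card = 2), sum_const, smul_eq_mul] at hsum
  rw [hsum, mul_comm]

end OrbitPairs

theorem exists_oneFactorization_of_involutions {ι V α : Type*} [Fintype V] [DecidableEq V]
    [DecidableEq α] (σ : ι → V → V) (hσ : ∀ i, Involutive (σ i)) (hfree : ∀ i x, σ i x ≠ x)
    (hunique : ∀ a b, a ≠ b → ∃! i, σ i a = b) (X : Finset α) (e : V ≃ X) :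
    ∃ S : ι → Finset (Finset α),
      (∀ i, ∀ p ∈ S i, p ⊆ X ∧ p.card = 2) ∧
      (∀ i, 2 * (S i).card = X.card) ∧
      (∀ i, ((S i : Set (Finset α))).Pairwise Disjoint) ∧
      (∀ p : Finset α, p ⊆ X → p.card = 2 → ∃! i, p ∈ S i) := by
  let f : V ↪ α := e.toEmbedding.trans (Embedding.subtype _)
  have hfX : ∀ v, f v ∈ X := fun v => (e v).2
  refine ⟨fun i => (orbitPairs (σ i)).image (map f), ?_, ?_, ?_, ?_⟩
  · intro i p hp
    obtain ⟨q, hq, rfl⟩ := mem_image.1 hp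
    refine ⟨fun y hy => ?_, ?_⟩
    · obtain ⟨v, -, rfl⟩ := mem_map.1 hy
      exact hfX v
    · rw [card_map, card_eq_two_of_mem_orbitPairs (hfree i) hq]
  · intro i
    rw [card_image_of_injective _ (map_injective f), two_mul_card_orbitPairs (hσ i) (hfree i),
      ← Fintype.card_coe X]
    exact Fintype.card_congr e
  · rintro i _ hp' _ hq' hne
    obtain ⟨p, hp, rfl⟩ := mem_image.1 hp'
    obtain ⟨q, hq, rfl⟩ := mem_image.1 hq'
    exact (disjoint_map f).2 <| pairwise_disjoint_orbitPairs (hσ i) hp hq fun h => hne (h ▸ rfl)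
  · intro p hpX hp
    obtain ⟨x, y, hxy, rfl⟩ := card_eq_two.1 hp
    set a := e.symm ⟨x, hpX (mem_insert_self x {y})⟩
    set b := e.symm ⟨y, hpX (mem_insert_of_mem (mem_singleton_self y))⟩
    have hab : a ≠ b := fun h => hxy (by simpa [a, b] using h)
    have hpair : ({x, y} : Finset α) = map f {a, b} := by simp [f, a, b]
    simp only [hpair, (map_injective f).mem_finset_image, pair_mem_orbitPairs_iff (hσ _) hab]
    exact hunique a b hab

section RoundRobin

variable {R : Type*} [Ring R]

lemma two_mul_sub_eq_self_iff {i a : R} : 2 * i - a = i ↔ a = i := by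
  rw [sub_eq_iff_eq_add, two_mul, add_right_inj, eq_comm]

variable [DecidableEq R]

def roundRobinPartner (i : R) : Option R → Option R
  | none => some i
  | some a => if a = i then none else some (2 * i - a)

lemma roundRobinPartner_involutive (i : R) : Involutive (roundRobinPartner i) := by
  rintro (_ | a)
  · simp [roundRobinPartner]
  · by_cases h : a = i
    · simp [roundRobinPartner, h]
    · simp [roundRobinPartner, h, two_mul_sub_eq_self_iff]

lemma roundRobinPartner_some_eq_some_iff {i a b : R} (hab : a ≠ b) :
    roundRobinPartner i (some a) = some b ↔ 2 * i = a + b := by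
  dsimp only [roundRobinPartner]
  split_ifs with ha
  · subst ha
    simp only [false_iff, two_mul]
    exact fun h => hab (add_left_cancel h)
  · rw [Option.some.injEq, sub_eq_iff_eq_add']

variable [Invertible (2 : R)]

lemma roundRobinPartner_ne (i : R) (x : Option R) : roundRobinPartner i x ≠ x := by
  rcases x with _ | a
  · simp [roundRobinPartner]
  · by_cases ha : a = i
    · simp [roundRobinPartner, ha]
    · simp only [roundRobinPartner, ha, if_false, ne_eq, Option.some.injEq,
        sub_eq_iff_eq_add', ← two_mul]
      exact fun h => ha ((isUnit_of_invertible 2).mul_left_cancel h).symm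

lemma existsUnique_roundRobinPartner_eq {x y : Option R} (hxy : x ≠ y) :
    ∃! i, roundRobinPartner i x = y := by
  rcases x with _ | a <;> rcases y with _ | b
  · exact absurd rfl hxy
  · exact ⟨b, rfl, fun i h => Option.some_injective _ h⟩
  · refine ⟨a, by simp [roundRobinPartner], fun i h => ?_⟩
    by_contra hia
    simp [roundRobinPartner, Ne.symm hia] at h
  · have hab : a ≠ b := fun h => hxy (h ▸ rfl)
    simp only [roundRobinPartner_some_eq_some_iff hab]
    exact ⟨⅟2 * (a + b), mul_invOf_cancel_left _ _, fun i h => by rw [← h, invOf_mul_cancel_left]⟩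

end RoundRobin

theorem stmt15 (n : ℕ) (hn : 0 < n) (α : Type*) [DecidableEq α]
    (X : Finset α) (hX : X.card = 2 * n) :
    ∃ S : Fin (2 * n - 1) → Finset (Finset α),
      (∀ i, ∀ p ∈ S i, p ⊆ X ∧ p.card = 2) ∧
      (∀ i, (S i).card = n) ∧
      (∀ i, ((S i : Set (Finset α))).Pairwise Disjoint) ∧
      (∀ p : Finset α, p ⊆ X → p.card = 2 → ∃! i, p ∈ S i) := by
  set m := 2 * n - 1
  have : NeZero m := ⟨by omega⟩
  have hunit : IsUnit (2 : ZMod m) := by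
    simpa using (ZMod.isUnit_iff_coprime 2 m).2 (Nat.coprime_two_left.2 ⟨n - 1, by omega⟩)
  let := hunit.invertible
  have e : Option (ZMod m) ≃ X := Fintype.equivOfCardEq (by simp [ZMod.card, hX]; omega)
  obtain ⟨S, hsub, hcard, hdisj, hunique⟩ := exists_oneFactorization_of_involutions
    (fun i : Fin m => roundRobinPartner (ZMod.finEquiv m i))
    (fun _ => roundRobinPartner_involutive _) (fun _ => roundRobinPartner_ne _)
    (fun _ _ hab => (ZMod.finEquiv m).toEquiv.existsUnique_congr_right.2
      (existsUnique_roundRobinPartner_eq hab)) X e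
  exact ⟨S, hsub, fun i => by have := hcard i; omega, hdisj, hunique⟩
end

section
/- Let q ≥ 4 be an even integer and let S be a Steiner quadruple system SQS(q) on B_q that satisfies the step property with respect to the order 0 < 1 < ⋯ < q−1. Then the number of quadruples in S of the form {2t, 2t+1, a, b} with 2t+1 < a and 2t+1 < b (for some t with 0 ≤ t ≤ q/2 − 1) equals q(q−2)/8. -/
/-- `S` is a Steiner quadruple system on `B_q = {0, 1, …, q-1}`: a collection of
4-element subsets of `B_q` such that every 3-element subset of `B_q` is contained
in exactly one member of `S`. -/
def IsSQS (q : ℕ) (S : Set (Finset ℕ)) : Prop :=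
  (∀ Q ∈ S, Q.card = 4 ∧ ∀ a ∈ Q, a < q) ∧
  (∀ T : Finset ℕ, T.card = 3 → (∀ a ∈ T, a < q) → ∃! Q, Q ∈ S ∧ T ⊆ Q)

/-- `S` satisfies the step property with respect to the total order
`L 0 < L 1 < ⋯ < L (q-1)` on `B_q`: every quadruple of the form
`{L (2t), L (2t+1), L a, L b}` in `S` has either `a < 2t` and `b < 2t`,
or `2t+1 < a` and `2t+1 < b`. -/
def StepProperty (q : ℕ) (L : ℕ → ℕ) (S : Set (Finset ℕ)) : Prop :=
  ∀ t a b : ℕ, 2 * t + 1 < q → a < q → b < q →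
    ({L (2 * t), L (2 * t + 1), L a, L b} : Finset ℕ) ∈ S →
    ((a < 2 * t ∧ b < 2 * t) ∨ (2 * t + 1 < a ∧ 2 * t + 1 < b))

/-- `L` enumerates a total order `L 0 < L 1 < ⋯ < L (q-1)` on `B_q`,
i.e. `L` restricted to `{0, …, q-1}` is a bijection onto `B_q`. -/
def IsOrderOn (q : ℕ) (L : ℕ → ℕ) : Prop :=
  (∀ i < q, L i < q) ∧ Set.InjOn L (Set.Iio q)

/-
Fix the pair `{2t, 2t+1}`. Every point `c > 2t+1` lies in exactly one quadruple of `S`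
through `{2t, 2t+1, c}`, and by the step property its fourth point is again `> 2t+1`.
So the quadruples `{2t, 2t+1, a, b}` with `a, b > 2t+1` split the `q - 2t - 2` points
above `2t+1` into pairs, and there are `q/2 - 1 - t` of them. Summing over `t < q/2`
gives `(q/2)(q/2 - 1)/2 = q(q-2)/8`.
-/

open Finset

open Classical in
noncomputable def pairQuads (q : ℕ) (S : Set (Finset ℕ)) (x y : ℕ) (U : Finset ℕ) :
    Finset (Finset ℕ) :=
  (range q).powerset.filter fun Q => Q ∈ S ∧ ∃ a ∈ U, ∃ b ∈ U, Q = {x, y, a, b}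

namespace IsSQS

variable {q : ℕ} {S : Set (Finset ℕ)}

theorem mem_pairQuads (hS : IsSQS q S) {x y : ℕ} {U Q : Finset ℕ} :
    Q ∈ pairQuads q S x y U ↔ Q ∈ S ∧ ∃ a ∈ U, ∃ b ∈ U, Q = {x, y, a, b} := by
  simp only [pairQuads, mem_filter, mem_powerset, and_iff_right_iff_imp]
  exact fun h a ha => mem_range.2 ((hS.1 Q h.1).2 a ha)

theorem exists_fourth_point (hS : IsSQS q S) {x y c : ℕ} (hxy : x ≠ y) (hxc : x ≠ c)
    (hyc : y ≠ c) (hx : x < q) (hy : y < q) (hc : c < q) :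
    ∃ d, ({x, y, c, d} : Finset ℕ) ∈ S ∧
      ∀ Q ∈ S, ({x, y, c} : Finset ℕ) ⊆ Q → Q = {x, y, c, d} := by
  have hT : ({x, y, c} : Finset ℕ).card = 3 := card_eq_three.2 ⟨x, y, c, hxy, hxc, hyc, rfl⟩
  obtain ⟨Q, ⟨hQS, hTQ⟩, huniq⟩ := hS.2 _ hT (by simp [hx, hy, hc])
  obtain ⟨d, -, rfl⟩ := exists_eq_insert_iff.2 ⟨hTQ, by rw [hT, (hS.1 _ hQS).1]⟩
  have hQ : insert d {x, y, c} = ({x, y, c, d} : Finset ℕ) := by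
    ext; simp only [mem_insert, mem_singleton]; tauto
  rw [hQ] at hQS huniq
  exact ⟨d, hQS, fun Q' hQ'S hTQ' => huniq Q' ⟨hQ'S, hTQ'⟩⟩

theorem two_mul_card_pairQuads (hS : IsSQS q S) {x y : ℕ} {U : Finset ℕ} (hxy : x ≠ y)
    (hx : x < q) (hy : y < q) (hxU : x ∉ U) (hyU : y ∉ U) (hUq : ∀ c ∈ U, c < q)
    (hclosed : ∀ c d, c ∈ U → ({x, y, c, d} : Finset ℕ) ∈ S → d ∈ U) :
    2 * (pairQuads q S x y U).card = U.card := by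
  have hne : ∀ c ∈ U, x ≠ c ∧ y ≠ c := fun c hc => ⟨ne_of_mem_of_not_mem hc hxU |>.symm,
    ne_of_mem_of_not_mem hc hyU |>.symm⟩
  have key := card_mul_eq_card_mul (fun (c : ℕ) (Q : Finset ℕ) => c ∈ Q) (s := U)
    (t := pairQuads q S x y U) (m := 1) (n := 2) ?above ?below
  · omega
  case above =>
    intro c hc
    obtain ⟨d, hQS, huniq⟩ :=
      hS.exists_fourth_point hxy (hne c hc).1 (hne c hc).2 hx hy (hUq c hc)
    refine card_eq_one.2 ⟨{x, y, c, d}, eq_singleton_iff_unique_mem.2 ⟨?_, ?_⟩⟩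
    · rw [bipartiteAbove, mem_filter, hS.mem_pairQuads]
      exact ⟨⟨hQS, c, hc, d, hclosed c d hc hQS, rfl⟩, by simp⟩
    · rintro Q' hQ'
      rw [bipartiteAbove, mem_filter, hS.mem_pairQuads] at hQ'
      obtain ⟨⟨hQ'S, a, ha, b, hb, rfl⟩, hcQ'⟩ := hQ'
      exact huniq _ hQ'S (insert_subset (by simp) (insert_subset (by simp)
        (singleton_subset_iff.2 hcQ')))
  case below =>
    intro Q hQ
    obtain ⟨hQS, a, ha, b, hb, rfl⟩ := hS.mem_pairQuads.1 hQ
    have hab : a ≠ b := by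
      rintro rfl
      have := (hS.1 _ hQS).1
      have h3 : ({x, y, a, a} : Finset ℕ).card ≤ 3 := by
        simp only [insert_eq_of_mem (mem_singleton_self a)]; exact card_le_three
      omega
    have hfilter :
        bipartiteBelow (fun (c : ℕ) (Q : Finset ℕ) => c ∈ Q) U {x, y, a, b} = {a, b} := by
      ext c
      simp only [bipartiteBelow, mem_filter, mem_insert, mem_singleton]
      constructor
      · rintro ⟨hc, rfl | rfl | h⟩
        · exact absurd hc hxU
        · exact absurd hc hyU
        · exact h
      · rintro (rfl | rfl) <;> simp [ha, hb]
    rw [hfilter, card_pair hab]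

end IsSQS

theorem two_mul_card_pairQuads_Ioo {q : ℕ} {S : Set (Finset ℕ)} (hS : IsSQS q S)
    (hstep : StepProperty q id S) {t : ℕ} (ht : 2 * t + 1 < q) :
    2 * (pairQuads q S (2 * t) (2 * t + 1) (Ioo (2 * t + 1) q)).card = q - 2 * t - 2 := by
  rw [hS.two_mul_card_pairQuads (by omega) (by omega) ht (by simp) (by simp)
    (fun c hc => (mem_Ioo.1 hc).2), Nat.card_Ioo]
  · omega
  intro c d hc hQ
  obtain ⟨hc, hcq⟩ := mem_Ioo.1 hc
  have hdq := (hS.1 _ hQ).2 d (by simp)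
  have := hstep t c d ht hcq hdq hQ
  exact mem_Ioo.2 ⟨by omega, hdq⟩

theorem pairwiseDisjoint_pairQuads_Ioo {q : ℕ} {S : Set (Finset ℕ)} (hS : IsSQS q S) (s : Set ℕ) :
    s.PairwiseDisjoint fun t => pairQuads q S (2 * t) (2 * t + 1) (Ioo (2 * t + 1) q) := by
  intro t _ t' _ htt'
  refine disjoint_left.2 fun Q hQ hQ' => htt' ?_
  obtain ⟨-, a, ha, b, hb, rfl⟩ := hS.mem_pairQuads.1 hQ
  obtain ⟨-, a', ha', b', hb', hQ'⟩ := hS.mem_pairQuads.1 hQ'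
  have h1 : 2 * t ∈ ({2 * t', 2 * t' + 1, a', b'} : Finset ℕ) := hQ' ▸ by simp
  have h2 : 2 * t' ∈ ({2 * t, 2 * t + 1, a, b} : Finset ℕ) := hQ' ▸ by simp
  simp only [mem_insert, mem_singleton, mem_Ioo] at h1 h2 ha hb ha' hb'
  omega

theorem sum_range_sub_one_sub (m : ℕ) : ∑ t ∈ range m, (m - 1 - t) = m * (m - 1) / 2 :=
  (sum_range_reflect id m).trans (sum_range_id m)

theorem stmt19_general (q : ℕ) (hqeven : Even q)
    (S : Set (Finset ℕ)) (hS : IsSQS q S)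
    (hstep : StepProperty q id S) :
    {Q ∈ S | ∃ t a b : ℕ, 2 * t + 1 < q ∧ 2 * t + 1 < a ∧ 2 * t + 1 < b ∧
        a < q ∧ b < q ∧ Q = ({2 * t, 2 * t + 1, a, b} : Finset ℕ)}.ncard
      = q * (q - 2) / 8 := by
  obtain ⟨m, rfl⟩ := hqeven
  have hset : {Q ∈ S | ∃ t a b : ℕ, 2 * t + 1 < m + m ∧ 2 * t + 1 < a ∧ 2 * t + 1 < b ∧
        a < m + m ∧ b < m + m ∧ Q = ({2 * t, 2 * t + 1, a, b} : Finset ℕ)} =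
      ↑((range m).biUnion fun t =>
        pairQuads (m + m) S (2 * t) (2 * t + 1) (Ioo (2 * t + 1) (m + m))) := by
    ext Q
    simp only [Set.mem_ofPred_eq, coe_biUnion, Set.mem_iUnion, mem_coe, mem_range,
      hS.mem_pairQuads, mem_Ioo, exists_prop]
    constructor
    · rintro ⟨hQS, t, a, b, ht, ha, hb, ha', hb', rfl⟩
      exact ⟨t, by omega, hQS, a, ⟨ha, ha'⟩, b, ⟨hb, hb'⟩, rfl⟩
    · rintro ⟨t, ht, hQS, a, ⟨ha, ha'⟩, b, ⟨hb, hb'⟩, rfl⟩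
      exact ⟨hQS, t, a, b, by omega, ha, hb, ha', hb', rfl⟩
  have hcount : ∀ t ∈ range m,
      (pairQuads (m + m) S (2 * t) (2 * t + 1) (Ioo (2 * t + 1) (m + m))).card = m - 1 - t := by
    intro t ht
    have := two_mul_card_pairQuads_Ioo hS hstep (t := t) (by rw [mem_range] at ht; omega)
    omega
  have hq : (m + m) * (m + m - 2) = 4 * (m * (m - 1)) := by
    rw [show m + m - 2 = 2 * (m - 1) by omega]; ring
  rw [hset, Set.ncard_coe_finset, card_biUnion (pairwiseDisjoint_pairQuads_Ioo hS _),
    sum_congr rfl hcount, sum_range_sub_one_sub, hq, show 8 = 4 * 2 from rfl,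
    Nat.mul_div_mul_left _ _ (by norm_num)]

theorem stmt19 (q : ℕ) (hq : 4 ≤ q) (hqeven : Even q)
    (S : Set (Finset ℕ)) (hS : IsSQS q S)
    (hstep : StepProperty q id S) :
    {Q ∈ S | ∃ t a b : ℕ, 2 * t + 1 < q ∧ 2 * t + 1 < a ∧ 2 * t + 1 < b ∧
        a < q ∧ b < q ∧ Q = ({2 * t, 2 * t + 1, a, b} : Finset ℕ)}.ncard
      = q * (q - 2) / 8 :=
  stmt19_general q hqeven S hS hstep
end
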